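/- Let v be a splitting vertex of a finite simple graph G with N(v) = {v_1,…,v_d}, and regard G_(v) as a graph on the vertex set consisting of {v_1,…,v_d} together with all vertices not in N(v)∪{v} that are adjacent in G to some v_i. Let q ≥ 5 be an integer. If every minimal cycle of the complement graph G^c has length at least q, then every minimal cycle of (G_(v))^c (the complement of G_(v) on the vertex set of G_(v)) has length at least q − 1. -/

import Mathlib

variable {V : Type*}

def delVerts (G : SimpleGraph V) (S : Set V) : SimpleGraph V where
  Adj x y := G.Adj x y ∧ x ∉ S ∧ y ∉ S
  symm := ⟨fun _ _ h => ⟨h.1.symm, h.2.2, h.2.1⟩⟩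
  loopless := ⟨fun x h => G.irrefl h.1⟩

/-- The graph `G_(v)`: its edges are the edges of the induced subgraph of `G`
on `N(v)` together with all edges of `G` incident to some neighbor of `v` but
not incident to `v`. -/
def splitSub (G : SimpleGraph V) (v : V) : SimpleGraph V where
  Adj x y := G.Adj x y ∧ x ≠ v ∧ y ≠ v ∧ (G.Adj v x ∨ G.Adj v y)
  symm := ⟨fun _ _ h => ⟨h.1.symm, h.2.2.1, h.2.1, h.2.2.2.symm⟩⟩
  loopless := ⟨fun x h => G.irrefl h.1⟩

def complOn (X : SimpleGraph V) (W : Set V) : SimpleGraph V where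
  Adj x y := x ∈ W ∧ y ∈ W ∧ x ≠ y ∧ ¬ X.Adj x y
  symm := ⟨fun _ _ h => ⟨h.2.1, h.1, h.2.2.1.symm, fun hadj => h.2.2.2 hadj.symm⟩⟩
  loopless := ⟨fun x h => h.2.2.1 rfl⟩

def HasMinimalCycle (X : SimpleGraph V) (ℓ : ℕ) : Prop :=
  4 ≤ ℓ ∧ ∃ c : ZMod ℓ → V, Function.Injective c ∧
    (∀ i, X.Adj (c i) (c (i + 1))) ∧
    (∀ i j : ZMod ℓ, j ≠ i → j ≠ i + 1 → i ≠ j + 1 → ¬ X.Adj (c i) (c j))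

/-!
Let `c` be a minimal cycle of the complement of `G_(v)` on `W`. Its chords are edges of `G` with
an endpoint in `N(v)`. If no edge of `c` is an edge of `G`, then `c` is already a minimal cycle of
`Gᶜ`. Otherwise some consecutive pair `c i₀, c (i₀ + 1)` is an edge of `G`; then neither endpoint
lies in `N(v)`, while every other vertex of `c` does (it spans a chord with one of the two, as the
length is at least 4). So this is the only such pair, and inserting `v` between `c i₀` and
`c (i₀ + 1)` yields a minimal cycle of `Gᶜ` of length one more.
-/

open Function

lemma ZMod.natCast_ne_zero_of_lt {ℓ k : ℕ} (hk : 0 < k) (hkℓ : k < ℓ) : (k : ZMod ℓ) ≠ 0 := by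
  rw [Ne, ZMod.natCast_eq_zero_iff]
  exact Nat.not_dvd_of_pos_of_lt hk hkℓ

lemma Fin.add_one_eq_zero_iff {n : ℕ} {i : Fin (n + 1)} : i + 1 = 0 ↔ i = Fin.last n := by
  rw [← Fin.last_add_one n, add_left_inj]

lemma Fin.val_eq_val_add_one_iff {n : ℕ} {i j : Fin (n + 1)} :
    (j : ℕ) = i + 1 ↔ j = i + 1 ∧ i + 1 ≠ 0 := by
  rw [Fin.ext_iff, Ne, Fin.ext_iff, Fin.val_add_one]
  split_ifs with h
  · simpa [h] using j.is_lt.ne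
  · rw [Fin.val_zero]
    omega

def IsInducedCycle (X : SimpleGraph V) {ℓ : ℕ} (c : ZMod ℓ → V) : Prop :=
  Injective c ∧ ∀ i j, X.Adj (c i) (c j) ↔ j = i + 1 ∨ i = j + 1

def IsInducedPath (X : SimpleGraph V) {m : ℕ} (p : Fin m → V) : Prop :=
  Injective p ∧ ∀ i j, X.Adj (p i) (p j) ↔ (j : ℕ) = i + 1 ∨ (i : ℕ) = j + 1

lemma hasMinimalCycle_iff {X : SimpleGraph V} {ℓ : ℕ} :
    HasMinimalCycle X ℓ ↔ 4 ≤ ℓ ∧ ∃ c : ZMod ℓ → V, IsInducedCycle X c := by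
  refine and_congr_right fun _ => exists_congr fun c => and_congr_right fun _ => ?_
  constructor
  · rintro ⟨hcyc, hchord⟩ i j
    refine ⟨fun h => ?_, ?_⟩
    · by_contra hij
      push Not at hij
      refine hchord i j ?_ hij.1 hij.2 h
      rintro rfl
      exact X.irrefl h
    · rintro (rfl | rfl)
      exacts [hcyc i, (hcyc j).symm]
  · intro hc
    refine ⟨fun i => (hc i (i + 1)).2 (Or.inl rfl), fun i j _ hj hi h => ?_⟩
    exact ((hc i j).1 h).elim hj hi

lemma IsInducedPath.isInducedCycle_snoc {X : SimpleGraph V} {n : ℕ} {p : Fin (n + 1) → V}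
    (hp : IsInducedPath X p) {v : V} (hpv : ∀ i, p i ≠ v)
    (hv : ∀ i, X.Adj v (p i) ↔ i = 0 ∨ i = Fin.last n) :
    IsInducedCycle X (Fin.snoc p v ∘ (ZMod.finEquiv (n + 2)).symm) := by
  set e := ZMod.finEquiv (n + 2)
  refine ⟨?_, ?_⟩
  · refine Injective.comp ?_ e.symm.injective
    intro i j hij
    induction i using Fin.lastCases <;> induction j using Fin.lastCases
    all_goals simp only [Fin.snoc_castSucc, Fin.snoc_last] at hij
    · rfl
    · exact absurd hij.symm (hpv _)
    · exact absurd hij (hpv _)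
    · rw [hp.1 hij]
  rw [e.surjective.forall₂]
  intro i j
  simp only [comp_apply, RingEquiv.symm_apply_apply, ← map_one e, ← map_add, e.injective.eq_iff]
  induction i using Fin.lastCases <;> induction j using Fin.lastCases
  all_goals simp only [Fin.snoc_castSucc, Fin.snoc_last, Fin.last_add_one, Fin.coeSucc_eq_succ,
    Fin.castSucc_eq_zero_iff, @eq_comm _ (Fin.last _), Fin.succ_eq_last_succ]
  · simp
  · exact hv _
  · rw [X.adj_comm, hv, or_comm]
  · rw [hp.2, Fin.ext_iff, Fin.ext_iff, Fin.val_succ, Fin.val_succ, Fin.val_castSucc,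
      Fin.val_castSucc]

lemma hasMinimalCycle_add_one_of_gap {X : SimpleGraph V} {ℓ : ℕ} (hℓ : 3 ≤ ℓ) {c : ZMod ℓ → V}
    (hc : Injective c) {i₀ : ZMod ℓ}
    (hadj : ∀ i j, X.Adj (c i) (c j) ↔ j = i + 1 ∧ i ≠ i₀ ∨ i = j + 1 ∧ j ≠ i₀)
    {v : V} (hcv : ∀ i, c i ≠ v) (hv : ∀ i, X.Adj v (c i) ↔ i = i₀ ∨ i = i₀ + 1) :
    HasMinimalCycle X (ℓ + 1) := by
  obtain ⟨n, rfl⟩ : ∃ n, ℓ = n + 1 := ⟨ℓ - 1, by omega⟩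
  set e := ZMod.finEquiv (n + 1)
  -- `c` read from `i₀ + 1` on: the missing edge now joins the two ends of `p`.
  set p : Fin (n + 1) → V := fun k => c (e k + (i₀ + 1))
  have hstep : ∀ i j, e j + (i₀ + 1) = e i + (i₀ + 1) + 1 ↔ j = i + 1 := fun i j => by
    rw [← e.injective.eq_iff, map_add, map_one]
    constructor <;> intro h <;> linear_combination h
  have hgap : ∀ k, e k + (i₀ + 1) = i₀ ↔ k + 1 = 0 := fun k => by
    rw [← e.injective.eq_iff, map_add, map_one, map_zero]
    constructor <;> intro h <;> linear_combination h
  have hp : IsInducedPath X p := by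
    refine ⟨hc.comp ((add_left_injective _).comp e.injective), fun i j => ?_⟩
    simp only [p, hadj, hstep, ne_eq, hgap, Fin.val_eq_val_add_one_iff]
  have hpv : ∀ k, X.Adj v (p k) ↔ k = 0 ∨ k = Fin.last n := fun k => by
    rw [hv, hgap, Fin.add_one_eq_zero_iff, add_eq_right, map_eq_zero_iff e e.injective, or_comm]
  exact hasMinimalCycle_iff.2 ⟨by omega, _, hp.isInducedCycle_snoc (fun k => hcv _) hpv⟩

section ComplOn

variable {X : SimpleGraph V} {W : Set V} {ℓ : ℕ} {c : ZMod ℓ → V}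

lemma complOn_adj_iff {x y : V} (hx : x ∈ W) (hy : y ∈ W) :
    (complOn X W).Adj x y ↔ x ≠ y ∧ ¬X.Adj x y := by
  simp only [complOn, hx, hy, true_and]

lemma IsInducedCycle.mem_of_complOn (hc : IsInducedCycle (complOn X W) c) (i : ZMod ℓ) :
    c i ∈ W :=
  ((hc.2 i (i + 1)).2 (Or.inl rfl)).1

lemma IsInducedCycle.adj_iff_of_complOn (hc : IsInducedCycle (complOn X W) c) (i j : ZMod ℓ) :
    X.Adj (c i) (c j) ↔ i ≠ j ∧ ¬(j = i + 1 ∨ i = j + 1) := by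
  have hne : X.Adj (c i) (c j) → i ≠ j := fun h => hc.1.ne_iff.1 h.ne
  rw [← hc.2, complOn_adj_iff (hc.mem_of_complOn i) (hc.mem_of_complOn j), hc.1.ne_iff]
  tauto

end ComplOn

section SplitSub

variable {G : SimpleGraph V} {v : V} {W : Set V} {ℓ : ℕ} {c : ZMod ℓ → V}

lemma splitSub_adj_iff {x y : V} (hx : x ≠ v) (hy : y ≠ v) :
    (splitSub G v).Adj x y ↔ G.Adj x y ∧ (G.Adj v x ∨ G.Adj v y) := by
  simp only [splitSub, hx, hy, ne_eq, not_false_eq_true, true_and]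

lemma IsInducedCycle.ne_of_splitSub (hvW : v ∉ W)
    (hc : IsInducedCycle (complOn (splitSub G v) W) c) (i : ZMod ℓ) : c i ≠ v :=
  ne_of_mem_of_not_mem (hc.mem_of_complOn i) hvW

lemma IsInducedCycle.adj_and_adj_or_adj_iff (hvW : v ∉ W)
    (hc : IsInducedCycle (complOn (splitSub G v) W) c) (i j : ZMod ℓ) :
    G.Adj (c i) (c j) ∧ (G.Adj v (c i) ∨ G.Adj v (c j)) ↔ i ≠ j ∧ ¬(j = i + 1 ∨ i = j + 1) := by
  rw [← splitSub_adj_iff (hc.ne_of_splitSub hvW i) (hc.ne_of_splitSub hvW j)]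
  exact hc.adj_iff_of_complOn i j

lemma IsInducedCycle.hasMinimalCycle_compl_of_forall_not_adj (hvW : v ∉ W) (hℓ : 4 ≤ ℓ)
    (hc : IsInducedCycle (complOn (splitSub G v) W) c) (hG : ∀ i, ¬G.Adj (c i) (c (i + 1))) :
    HasMinimalCycle Gᶜ ℓ := by
  have h1 : (1 : ZMod ℓ) ≠ 0 := by exact_mod_cast ZMod.natCast_ne_zero_of_lt one_pos (by omega)
  refine hasMinimalCycle_iff.2 ⟨hℓ, c, hc.1, fun i j => ?_⟩
  rw [SimpleGraph.compl_adj, hc.1.ne_iff]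
  constructor
  · rintro ⟨hne, hnadj⟩
    by_contra hij
    exact hnadj ((hc.adj_and_adj_or_adj_iff hvW i j).2 ⟨hne, hij⟩).1
  · rintro (rfl | rfl)
    · exact ⟨left_ne_add.2 h1, hG i⟩
    · exact ⟨add_ne_left.2 h1, fun h => hG j h.symm⟩

lemma IsInducedCycle.adj_iff_ne_and_ne (hvW : v ∉ W) (hℓ : 4 ≤ ℓ)
    (hc : IsInducedCycle (complOn (splitSub G v) W) c) {i₀ : ZMod ℓ}
    (hi₀ : G.Adj (c i₀) (c (i₀ + 1))) (j : ZMod ℓ) :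
    G.Adj v (c j) ↔ j ≠ i₀ ∧ j ≠ i₀ + 1 := by
  have h3 : (3 : ZMod ℓ) ≠ 0 := by exact_mod_cast ZMod.natCast_ne_zero_of_lt three_pos (by omega)
  have key := hc.adj_and_adj_or_adj_iff hvW
  have hgap : ¬G.Adj v (c i₀) ∧ ¬G.Adj v (c (i₀ + 1)) := by
    have := (key i₀ (i₀ + 1)).not.2 (by simp)
    tauto
  refine ⟨fun hj => ⟨?_, ?_⟩, fun ⟨hj₀, hj₁⟩ => ?_⟩
  · rintro rfl
    exact hgap.1 hj
  · rintro rfl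
    exact hgap.2 hj
  by_cases hj : i₀ = j + 1
  · refine ((key (i₀ + 1) j).2 ⟨Ne.symm hj₁, ?_⟩).2.resolve_left hgap.2
    rintro (h | h)
    · exact h3 (by linear_combination -h - hj)
    · exact hj₀ (by linear_combination -h)
  · exact ((key i₀ j).2 ⟨Ne.symm hj₀, not_or.2 ⟨hj₁, hj⟩⟩).2.resolve_left hgap.1

lemma IsInducedCycle.hasMinimalCycle_compl_add_one (hvW : v ∉ W) (hℓ : 4 ≤ ℓ)
    (hc : IsInducedCycle (complOn (splitSub G v) W) c) {i₀ : ZMod ℓ}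
    (hi₀ : G.Adj (c i₀) (c (i₀ + 1))) :
    HasMinimalCycle Gᶜ (ℓ + 1) := by
  have h1 : (1 : ZMod ℓ) ≠ 0 := by exact_mod_cast ZMod.natCast_ne_zero_of_lt one_pos (by omega)
  have h2 : (2 : ZMod ℓ) ≠ 0 := by exact_mod_cast ZMod.natCast_ne_zero_of_lt two_pos (by omega)
  have key := hc.adj_and_adj_or_adj_iff hvW
  have hN := hc.adj_iff_ne_and_ne hvW hℓ hi₀
  have hedge : ∀ i, i ≠ i₀ → ¬G.Adj (c i) (c (i + 1)) := by
    intro i hi hadj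
    have hnot : ¬G.Adj v (c i) ∧ ¬G.Adj v (c (i + 1)) := by
      have := (key i (i + 1)).not.2 (by simp)
      tauto
    obtain rfl : i = i₀ + 1 := by
      by_contra h
      exact hnot.1 ((hN i).2 ⟨hi, h⟩)
    refine hnot.2 ((hN _).2 ⟨fun h => h2 ?_, fun h => h1 ?_⟩) <;> linear_combination h
  refine hasMinimalCycle_add_one_of_gap (by omega) hc.1 (i₀ := i₀) (fun i j => ?_)
    (hc.ne_of_splitSub hvW) (fun i => ?_)
  · rw [SimpleGraph.compl_adj, hc.1.ne_iff]
    constructor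
    · rintro ⟨hne, hnadj⟩
      have hcons : j = i + 1 ∨ i = j + 1 := by
        by_contra h
        exact hnadj ((key i j).2 ⟨hne, h⟩).1
      rcases hcons with rfl | rfl
      · exact Or.inl ⟨rfl, by rintro rfl; exact hnadj hi₀⟩
      · exact Or.inr ⟨rfl, by rintro rfl; exact hnadj hi₀.symm⟩
    · rintro (⟨rfl, hi⟩ | ⟨rfl, hj⟩)
      · exact ⟨left_ne_add.2 h1, hedge i hi⟩
      · exact ⟨add_ne_left.2 h1, fun h => hedge j hj h.symm⟩
  · rw [SimpleGraph.compl_adj, hN, ne_comm]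
    have := hc.ne_of_splitSub hvW i
    tauto

end SplitSub

theorem stmt13_general (G : SimpleGraph V) (v : V)
    (q : ℕ)
    (hGc : ∀ ℓ : ℕ, HasMinimalCycle Gᶜ ℓ → q ≤ ℓ) :
    ∀ ℓ : ℕ,
      HasMinimalCycle
        (complOn (splitSub G v)
          (G.neighborSet v ∪
            {w | w ∉ insert v (G.neighborSet v) ∧
              ∃ vi ∈ G.neighborSet v, G.Adj vi w})) ℓ →
      q - 1 ≤ ℓ := by
  intro ℓ hcyc
  obtain ⟨hℓ, c, hc⟩ := hasMinimalCycle_iff.1 hcyc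
  have hvW : v ∉ G.neighborSet v ∪
      {w | w ∉ insert v (G.neighborSet v) ∧ ∃ vi ∈ G.neighborSet v, G.Adj vi w} := by
    rintro (h | h)
    exacts [G.irrefl h, h.1 (Set.mem_insert _ _)]
  by_cases hgap : ∃ i₀, G.Adj (c i₀) (c (i₀ + 1))
  · obtain ⟨i₀, hi₀⟩ := hgap
    have := hGc _ (hc.hasMinimalCycle_compl_add_one hvW hℓ hi₀)
    omega
  · push Not at hgap
    have := hGc _ (hc.hasMinimalCycle_compl_of_forall_not_adj hvW hℓ hgap)
    omega

/-- let `v` be a splitting vertex of `G`, and regard `G_(v)` as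
a graph on the vertex set `W` consisting of `N(v)` together with the vertices
outside `N(v) ∪ {v}` adjacent in `G` to some neighbor of `v`. If `q ≥ 5` and
every minimal cycle of `Gᶜ` has length at least `q`, then every minimal cycle
of `(G_(v))ᶜ` (the complement taken on `W`) has length at least `q - 1`. -/
theorem stmt13 [Fintype V] [DecidableEq V] (G : SimpleGraph V) (v : V)
    (hdeg : (G.neighborSet v).Nonempty)
    (hsplit : ∃ x y, (delVerts G {v}).Adj x y)
    (q : ℕ) (hq : 5 ≤ q)
    (hGc : ∀ ℓ : ℕ, HasMinimalCycle Gᶜ ℓ → q ≤ ℓ) :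
    ∀ ℓ : ℕ,
      HasMinimalCycle
        (complOn (splitSub G v)
          (G.neighborSet v ∪
            {w | w ∉ insert v (G.neighborSet v) ∧
              ∃ vi ∈ G.neighborSet v, G.Adj vi w})) ℓ →
      q - 1 ≤ ℓ :=
  stmt13_general G v q hGc
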